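/- arXiv:1311.5618 — 2 statements merged into one kernel-verified Lean document; each statement's English description precedes it below -/
import Mathlib

section
/- Let k be an algebraically closed field of characteristic zero, let L be a locally finite dimensional Lie algebra over k, and let V be an integrable, faithful L-module. If L stabilizes a maximal generalized flag in V (i.e., there is a maximal generalized flag 𝔉 in V with x·F ⊆ F for all x ∈ L and all F ∈ 𝔉), then L is locally solvable. -/
/-!
Let `M` be the finite-dimensional subalgebra generated by a finite subset of `L`. Being
finite-dimensional and faithful on `V`, it is already faithful on finitely many vectors, hence
on a finite-dimensional `M`-invariant subspace `W` given by integrability.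

On a one-dimensional quotient `F'' / F'` of the flag every element of `L` acts by a scalar, so
every commutator maps `F''` into `F'`. Filter `W` by `flagLevel 𝔉 W m`, the span of the
intersections `F ⊓ W` (`F ∈ 𝔉`) of dimension at most `m`: commutators of `M` lower the level by
one, hence the `(n + 1)`-st derived algebra of `M` lowers it by `2 ^ n`. As `W` has level
`dim W < 2 ^ dim W` and level `0` is zero, the `(dim W + 1)`-st derived algebra kills `W`, so
it vanishes.
-/

def IsImmediateSucc {k V : Type*} [Field k] [AddCommGroup V] [Module k V]
    (𝔉 : Set (Submodule k V)) (F' F'' : Submodule k V) : Prop :=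
  F' ∈ 𝔉 ∧ F'' ∈ 𝔉 ∧ F' < F'' ∧ ∀ G ∈ 𝔉, ¬(F' < G ∧ G < F'')

def IsGeneralizedFlag {k V : Type*} [Field k] [AddCommGroup V] [Module k V]
    (𝔉 : Set (Submodule k V)) : Prop :=
  IsChain (· ≤ ·) 𝔉 ∧
  (∀ F ∈ 𝔉, (∃ G, IsImmediateSucc 𝔉 G F) ∨ (∃ G, IsImmediateSucc 𝔉 F G)) ∧
  (∀ v : V, v ≠ 0 → ∃ F' F'', IsImmediateSucc 𝔉 F' F'' ∧ v ∈ F'' ∧ v ∉ F')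

def IsMaximalGeneralizedFlag {k V : Type*} [Field k] [AddCommGroup V] [Module k V]
    (𝔉 : Set (Submodule k V)) : Prop :=
  IsGeneralizedFlag 𝔉 ∧
  ∀ F' F'' : Submodule k V, IsImmediateSucc 𝔉 F' F'' →
    Module.finrank k (F'' ⧸ (F'.comap F''.subtype)) = 1

theorem Submodule.exists_finset_iInf_eq_iInf {R E ι : Type*} [Ring R] [AddCommGroup E]
    [Module R E] [IsArtinian R E] (p : ι → Submodule R E) :
    ∃ t : Finset ι, ⨅ i ∈ t, p i = ⨅ i, p i := by
  classical
  obtain ⟨_, ⟨t, rfl⟩, hmin⟩ :=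
    IsArtinian.set_has_minimal (Set.range fun t : Finset ι => ⨅ i ∈ t, p i) ⟨_, ⟨∅, rfl⟩⟩
  refine ⟨t, le_antisymm (le_iInf fun j => ?_) (le_iInf₂ fun i _ => iInf_le p i)⟩
  have hle : ⨅ i ∈ insert j t, p i ≤ ⨅ i ∈ t, p i :=
    iInf_le_iInf_of_subset (Finset.subset_insert j t)
  rw [← hle.lt_or_eq.resolve_left (hmin _ ⟨insert j t, rfl⟩)]
  exact iInf₂_le j (Finset.mem_insert_self j t)

theorem LieModule.exists_finset_faithful {k M V : Type*} [Field k] [LieRing M] [LieAlgebra k M]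
    [FiniteDimensional k M] [AddCommGroup V] [Module k V] [LieRingModule M V] [LieModule k M V]
    (h : ∀ x : M, (∀ v : V, ⁅x, v⁆ = 0) → x = 0) :
    ∃ S : Finset V, ∀ x : M, (∀ v ∈ S, ⁅x, v⁆ = 0) → x = 0 := by
  let φ : M →ₗ[k] Module.End k V := LieModule.toEnd k M V
  obtain ⟨S, hS⟩ := Submodule.exists_finset_iInf_eq_iInf fun v => LinearMap.ker (φ.flip v)
  refine ⟨S, fun x hx => h x fun v => ?_⟩
  have hxS : x ∈ ⨅ v ∈ S, LinearMap.ker (φ.flip v) := by simpa [φ] using hx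
  rw [hS] at hxS
  simpa [φ] using Submodule.mem_iInf _ |>.mp hxS v

section OneDimensionalQuotient

variable {k L V : Type*} [Field k] [LieRing L] [LieAlgebra k L]
  [AddCommGroup V] [Module k V] [LieRingModule L V] [LieModule k L V]
  {p q : Submodule k V}

theorem Submodule.exists_sub_smul_mem_of_finrank_quotient_eq_one
    (h : Module.finrank k (q ⧸ p.comap q.subtype) = 1) :
    ∃ w ∈ q, ∀ u ∈ q, ∃ c : k, u - c • w ∈ p := by
  obtain ⟨w, -, hw⟩ := finrank_eq_one_iff'.mp h
  obtain ⟨w, rfl⟩ := Submodule.Quotient.mk_surjective _ w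
  refine ⟨w, w.2, fun u hu => ?_⟩
  obtain ⟨c, hc⟩ := hw (Submodule.Quotient.mk ⟨u, hu⟩)
  rw [← Submodule.Quotient.mk_smul, Submodule.Quotient.eq] at hc
  exact ⟨c, by simpa using p.neg_mem hc⟩

theorem exists_lie_sub_smul_mem_of_finrank_quotient_eq_one
    (h : Module.finrank k (q ⧸ p.comap q.subtype) = 1) {x : L}
    (hp : ∀ v ∈ p, ⁅x, v⁆ ∈ p) (hq : ∀ v ∈ q, ⁅x, v⁆ ∈ q) :
    ∃ c : k, ∀ u ∈ q, ⁅x, u⁆ - c • u ∈ p := by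
  obtain ⟨w, hw, hgen⟩ := Submodule.exists_sub_smul_mem_of_finrank_quotient_eq_one h
  obtain ⟨c, hc⟩ := hgen ⁅x, w⁆ (hq w hw)
  refine ⟨c, fun u hu => ?_⟩
  obtain ⟨a, ha⟩ := hgen u hu
  have key : ⁅x, u⁆ - c • u = (⁅x, u - a • w⁆ - c • (u - a • w)) + a • (⁅x, w⁆ - c • w) := by
    rw [lie_sub, lie_smul]; module
  rw [key]
  exact p.add_mem (p.sub_mem (hp _ ha) (p.smul_mem _ ha)) (p.smul_mem _ hc)

theorem lie_lie_mem_of_finrank_quotient_eq_one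
    (h : Module.finrank k (q ⧸ p.comap q.subtype) = 1) {x y : L}
    (hxp : ∀ v ∈ p, ⁅x, v⁆ ∈ p) (hxq : ∀ v ∈ q, ⁅x, v⁆ ∈ q)
    (hyp : ∀ v ∈ p, ⁅y, v⁆ ∈ p) (hyq : ∀ v ∈ q, ⁅y, v⁆ ∈ q) {u : V} (hu : u ∈ q) :
    ⁅⁅x, y⁆, u⁆ ∈ p := by
  obtain ⟨c, hc⟩ := exists_lie_sub_smul_mem_of_finrank_quotient_eq_one h hxp hxq
  obtain ⟨d, hd⟩ := exists_lie_sub_smul_mem_of_finrank_quotient_eq_one h hyp hyq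
  have hX := hc u hu
  have hY := hd u hu
  have key : ⁅⁅x, y⁆, u⁆ = ⁅x, ⁅y, u⁆ - d • u⁆ - ⁅y, ⁅x, u⁆ - c • u⁆
      + d • (⁅x, u⁆ - c • u) - c • (⁅y, u⁆ - d • u) := by
    rw [lie_lie, lie_sub, lie_sub, lie_smul, lie_smul]; module
  rw [key]
  exact p.sub_mem (p.add_mem (p.sub_mem (hxp _ hY) (hyp _ hX)) (p.smul_mem _ hX))
    (p.smul_mem _ hY)

end OneDimensionalQuotient

theorem IsImmediateSucc.le_of_mem_of_notMem {k V : Type*} [Field k] [AddCommGroup V]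
    [Module k V] {𝔉 : Set (Submodule k V)} (hch : IsChain (· ≤ ·) 𝔉)
    {F' F'' F : Submodule k V} (hp : IsImmediateSucc 𝔉 F' F'') (hF : F ∈ 𝔉) {u : V}
    (hu : u ∈ F) (hu' : u ∉ F') : F'' ≤ F := by
  obtain ⟨hF', hF'', -, himm⟩ := hp
  have hlt : F' < F := by
    rcases hch.total hF' hF with h | h
    · exact lt_of_le_of_ne h (by rintro rfl; exact hu' hu)
    · exact absurd (h hu) hu'
  rcases hch.total hF'' hF with h | h
  · exact h
  · rcases h.lt_or_eq with h | rfl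
    · exact absurd ⟨hlt, h⟩ (himm F hF)
    · exact le_rfl

section FlagLevel

variable {k L V : Type*} [Field k] [LieRing L] [LieAlgebra k L]
  [AddCommGroup V] [Module k V] [LieRingModule L V] [LieModule k L V]
  (𝔉 : Set (Submodule k V)) (W : Submodule k V)

def flagLevel (m : ℕ) : Submodule k V :=
  sSup ((· ⊓ W) '' {F ∈ 𝔉 | Module.finrank k ↥(F ⊓ W) ≤ m})

variable {𝔉 W}

theorem inf_le_flagLevel {m : ℕ} {F : Submodule k V} (hF : F ∈ 𝔉)
    (hm : Module.finrank k ↥(F ⊓ W) ≤ m) : F ⊓ W ≤ flagLevel 𝔉 W m :=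
  le_sSup ⟨F, ⟨hF, hm⟩, rfl⟩

theorem exists_mem_of_mem_flagLevel (hch : IsChain (· ≤ ·) 𝔉) {m : ℕ} {u : V}
    (hu : u ∈ flagLevel 𝔉 W m) (hu0 : u ≠ 0) :
    ∃ F ∈ 𝔉, u ∈ F ∧ u ∈ W ∧ Module.finrank k ↥(F ⊓ W) ≤ m := by
  rcases Set.eq_empty_or_nonempty {F ∈ 𝔉 | Module.finrank k ↥(F ⊓ W) ≤ m} with he | hne
  · simp [flagLevel, he, hu0] at hu
  have hdir : DirectedOn (· ≤ ·) ((· ⊓ W) '' {F ∈ 𝔉 | Module.finrank k ↥(F ⊓ W) ≤ m}) :=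
    (Monotone.isChain_image (fun _ _ h => inf_le_inf_right W h)
      (hch.mono fun _ hF => hF.1)).directedOn
  obtain ⟨_, ⟨F, ⟨hF, hm⟩, rfl⟩, huF⟩ := (Submodule.mem_sSup_of_directed (hne.image _) hdir).mp hu
  exact ⟨F, hF, huF.1, huF.2, hm⟩

theorem flagLevel_zero [FiniteDimensional k W] : flagLevel 𝔉 W 0 = ⊥ := by
  refine sSup_eq_bot.mpr ?_
  rintro _ ⟨F, ⟨-, hF⟩, rfl⟩
  have : FiniteDimensional k ↥(F ⊓ W) := Submodule.finiteDimensional_of_le inf_le_right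
  exact Submodule.finrank_eq_zero.mp (Nat.le_zero.mp hF)

theorem le_flagLevel (hflag : IsGeneralizedFlag 𝔉) {m : ℕ} [FiniteDimensional k W]
    (hm : Module.finrank k W ≤ m) : W ≤ flagLevel 𝔉 W m := by
  intro w hw
  by_cases hw0 : w = 0
  · simp [hw0]
  obtain ⟨_, F, hF, hwF, -⟩ := hflag.2.2 w hw0
  exact inf_le_flagLevel hF.2.1 ((Submodule.finrank_mono inf_le_right).trans hm) ⟨hwF, hw⟩

theorem lie_lie_mem_flagLevel (hflag : IsMaximalGeneralizedFlag 𝔉) [FiniteDimensional k W]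
    {x y : L} (hx : ∀ F ∈ 𝔉, ∀ v ∈ F, ⁅x, v⁆ ∈ F) (hy : ∀ F ∈ 𝔉, ∀ v ∈ F, ⁅y, v⁆ ∈ F)
    (hxW : ∀ w ∈ W, ⁅x, w⁆ ∈ W) (hyW : ∀ w ∈ W, ⁅y, w⁆ ∈ W) {m : ℕ} {u : V}
    (hu : u ∈ flagLevel 𝔉 W (m + 1)) : ⁅⁅x, y⁆, u⁆ ∈ flagLevel 𝔉 W m := by
  obtain ⟨⟨hch, -, hsep⟩, hmax⟩ := hflag
  by_cases hu0 : u = 0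
  · simp [hu0]
  obtain ⟨F, hF, huF, huW, hFm⟩ := exists_mem_of_mem_flagLevel hch hu hu0
  obtain ⟨F', F'', hp, huF'', huF'⟩ := hsep u hu0
  have hmemF' : ⁅⁅x, y⁆, u⁆ ∈ F' := lie_lie_mem_of_finrank_quotient_eq_one (hmax F' F'' hp)
    (hx F' hp.1) (hx F'' hp.2.1) (hy F' hp.1) (hy F'' hp.2.1) huF''
  have hmemW : ⁅⁅x, y⁆, u⁆ ∈ W := by
    rw [lie_lie]
    exact W.sub_mem (hxW _ (hyW u huW)) (hyW _ (hxW u huW))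
  have hlt : F' ⊓ W < F'' ⊓ W :=
    lt_of_le_of_ne (inf_le_inf_right W hp.2.2.1.le) fun h => huF' (h.ge ⟨huF'', huW⟩).1
  have hle : F'' ⊓ W ≤ F ⊓ W := inf_le_inf_right W (hp.le_of_mem_of_notMem hch hF huF huF')
  have : FiniteDimensional k ↥(F ⊓ W) := Submodule.finiteDimensional_of_le inf_le_right
  have hrank := (Submodule.finrank_lt_finrank_of_lt hlt).trans_le (Submodule.finrank_mono hle)
  exact inf_le_flagLevel hp.1 (by omega) ⟨hmemF', hmemW⟩

end FlagLevel

section Lowering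

variable {k M V : Type*} [Field k] [LieRing M] [LieAlgebra k M]
  [AddCommGroup V] [Module k V] [LieRingModule M V] [LieModule k M V]
  (U : ℕ → Submodule k V)

def loweringBy (d : ℕ) : Submodule k M where
  carrier := {z | ∀ m, ∀ u ∈ U (m + d), ⁅z, u⁆ ∈ U m}
  add_mem' hz hz' m u hu := by rw [add_lie]; exact (U m).add_mem (hz m u hu) (hz' m u hu)
  zero_mem' m u _ := by rw [zero_lie]; exact (U m).zero_mem
  smul_mem' c z hz m u hu := by rw [smul_lie]; exact (U m).smul_mem c (hz m u hu)

variable {U}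

theorem lie_mem_loweringBy_add {a b : M} {d e : ℕ} (ha : a ∈ loweringBy U d)
    (hb : b ∈ loweringBy U e) : ⁅a, b⁆ ∈ loweringBy U (d + e) := by
  intro m u hu
  rw [lie_lie]
  refine (U m).sub_mem (ha m _ (hb (m + d) u ?_)) (hb m _ (ha (m + e) u ?_)) <;>
    simpa only [add_assoc, add_comm d e] using hu

theorem mem_loweringBy_of_mem_lie {I J : LieIdeal k M} {d : ℕ}
    (h : ∀ a ∈ I, ∀ b ∈ J, ⁅a, b⁆ ∈ loweringBy U d) {z : M} (hz : z ∈ ⁅I, J⁆) :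
    z ∈ loweringBy U d := by
  rw [← LieSubmodule.mem_toSubmodule, LieSubmodule.lieIdeal_oper_eq_linear_span'] at hz
  refine Submodule.span_le.mpr ?_ hz
  rintro _ ⟨a, ha, b, hb, rfl⟩
  exact h a ha b hb

theorem mem_loweringBy_of_mem_derivedSeries (h : ∀ x y : M, ⁅x, y⁆ ∈ loweringBy U 1) {n : ℕ}
    {z : M} (hz : z ∈ LieAlgebra.derivedSeries k M (n + 1)) : z ∈ loweringBy U (2 ^ n) := by
  induction n generalizing z with
  | zero =>
    rw [LieAlgebra.derivedSeries_def, LieAlgebra.derivedSeriesOfIdeal_succ,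
      LieAlgebra.derivedSeriesOfIdeal_zero] at hz
    exact mem_loweringBy_of_mem_lie (fun x _ y _ => h x y) hz
  | succ n ih =>
    rw [LieAlgebra.derivedSeries_def, LieAlgebra.derivedSeriesOfIdeal_succ,
      ← LieAlgebra.derivedSeries_def] at hz
    rw [pow_succ, mul_two]
    exact mem_loweringBy_of_mem_lie (fun a ha b hb => lie_mem_loweringBy_add (ih ha) (ih hb)) hz

end Lowering

theorem locallySolvable_of_stabilizes_maximal_flag_general
    {k L V : Type*} [Field k]
    [LieRing L] [LieAlgebra k L]
    [AddCommGroup V] [Module k V] [LieRingModule L V] [LieModule k L V]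
    -- `L` is locally finite dimensional
    (hLF : ∀ s : Finset L, FiniteDimensional k (LieSubalgebra.lieSpan k L ↑s))
    -- `V` is an integrable `L`-module
    (hInt : ∀ (s : Finset V) (t : Finset L), ∃ W : Submodule k V,
      FiniteDimensional k W ∧ (↑s : Set V) ⊆ (W : Set V) ∧
      ∀ x ∈ LieSubalgebra.lieSpan k L ↑t, ∀ w ∈ W, ⁅x, w⁆ ∈ W)
    -- `V` is a faithful `L`-module
    (hFaith : ∀ x : L, (∀ v : V, ⁅x, v⁆ = 0) → x = 0)
    -- `L` stabilizes a maximal generalized flag in `V`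
    (𝔉 : Set (Submodule k V)) (hflag : IsMaximalGeneralizedFlag 𝔉)
    (hstab : ∀ x : L, ∀ F ∈ 𝔉, ∀ v ∈ F, ⁅x, v⁆ ∈ F) :
    -- `L` is locally solvable
    ∀ s : Finset L, LieAlgebra.IsSolvable (LieSubalgebra.lieSpan k L ↑s) := by
  intro s
  have : FiniteDimensional k (LieSubalgebra.lieSpan k L ↑s) := hLF s
  obtain ⟨S, hS⟩ := LieModule.exists_finset_faithful (k := k) (M := LieSubalgebra.lieSpan k L ↑s)
    (V := V) fun x hx => (LieSubalgebra.coe_zero_iff_zero _ x).mp (hFaith x hx)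
  obtain ⟨W, hWfd, hSW, hWinv⟩ := hInt S s
  have hdrop : ∀ x y : LieSubalgebra.lieSpan k L ↑s, ⁅x, y⁆ ∈ loweringBy (flagLevel 𝔉 W) 1 :=
    fun x y _ _ hu => lie_lie_mem_flagLevel hflag (hstab x) (hstab y) (hWinv x x.2) (hWinv y y.2) hu
  refine (LieAlgebra.isSolvable_iff k _).mpr ⟨Module.finrank k W + 1,
    (LieSubmodule.eq_bot_iff _).mpr fun z hz => hS z fun v hv => ?_⟩
  have hvW : v ∈ flagLevel 𝔉 W (0 + 2 ^ Module.finrank k W) :=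
    le_flagLevel hflag.1 (by simpa using Nat.lt_two_pow_self.le) (hSW hv)
  simpa [flagLevel_zero] using mem_loweringBy_of_mem_derivedSeries hdrop hz 0 v hvW

/-- If a locally finite Lie algebra `L` with an integrable faithful module `V` stabilizes a
maximal generalized flag in `V`, then `L` is locally solvable. -/
theorem locallySolvable_of_stabilizes_maximal_flag
    {k L V : Type*} [Field k] [IsAlgClosed k] [CharZero k]
    [LieRing L] [LieAlgebra k L]
    [AddCommGroup V] [Module k V] [LieRingModule L V] [LieModule k L V]
    -- `L` is locally finite dimensional
    (hLF : ∀ s : Finset L, FiniteDimensional k (LieSubalgebra.lieSpan k L ↑s))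
    -- `V` is an integrable `L`-module
    (hInt : ∀ (s : Finset V) (t : Finset L), ∃ W : Submodule k V,
      FiniteDimensional k W ∧ (↑s : Set V) ⊆ (W : Set V) ∧
      ∀ x ∈ LieSubalgebra.lieSpan k L ↑t, ∀ w ∈ W, ⁅x, w⁆ ∈ W)
    -- `V` is a faithful `L`-module
    (hFaith : ∀ x : L, (∀ v : V, ⁅x, v⁆ = 0) → x = 0)
    -- `L` stabilizes a maximal generalized flag in `V`
    (𝔉 : Set (Submodule k V)) (hflag : IsMaximalGeneralizedFlag 𝔉)
    (hstab : ∀ x : L, ∀ F ∈ 𝔉, ∀ v ∈ F, ⁅x, v⁆ ∈ F) :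
    -- `L` is locally solvable
    ∀ s : Finset L, LieAlgebra.IsSolvable (LieSubalgebra.lieSpan k L ↑s) :=
  locallySolvable_of_stabilizes_maximal_flag_general hLF hInt hFaith 𝔉 hflag hstab
end

section
/- Let k be an algebraically closed field of characteristic zero, let B be a locally solvable Lie algebra over k, and let V be an integrable B-module. Then B stabilizes some maximal generalized flag in V; that is, there exists a maximal generalized flag 𝔉 in V such that x·F ⊆ F for all x ∈ B and all F ∈ 𝔉. -/
/-!
Take a maximal chain of `B`-submodules of `V`. It is closed under arbitrary sums and
intersections, and the submodule generated by one vector is compact, so every nonzero `v` is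
separated by a jump `A₁ ⋖ A₂` of the chain; the endpoints of the jumps form a `B`-stable
generalized flag.

Each jump is one-dimensional. Fix `u ∈ A₂ \ A₁`. For finite `t ⊆ B`, Lie's theorem for the
solvable algebra generated by `t`, applied on a finite-dimensional stable subspace containing
`u`, makes `u` a weight vector modulo some `t`-stable `P ⊇ A₁` with `u ∉ P`. The possible
weights form finite (they are eigenvalues on that subspace), nonempty, restriction-compatible
sets, so by König's lemma there is one weight `χ : B → k` that works for every `t`. The
union over `t` of the smallest admissible `P` is then a `B`-submodule `U ⊇ A₁` avoiding `u`
and containing every `⁅x, u⁆ - χ x • u`. Since `A₁ ⋖ A₂`, `U ⊓ A₂ = A₁`, so `A₁ + k u` is a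
`B`-submodule strictly above `A₁`, hence equal to `A₂`.
-/

namespace Flag

variable {α : Type*} [CompleteLattice α] (s : Flag α) {t : Set α}

theorem sSup_mem (ht : t ⊆ s) : sSup t ∈ s := by
  refine mem_iff_forall_le_or_ge.2 fun b hb => ?_
  by_cases h : ∀ a ∈ t, a ≤ b
  · exact .inl (sSup_le h)
  · obtain ⟨a, ha, hab⟩ := not_forall₂.mp h
    exact .inr ((s.le_or_le hb (ht ha)).resolve_right hab |>.trans (le_sSup ha))

theorem sInf_mem (ht : t ⊆ s) : sInf t ∈ s := by
  refine mem_iff_forall_le_or_ge.2 fun b hb => ?_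
  by_cases h : ∀ a ∈ t, b ≤ a
  · exact .inr (le_sInf h)
  · obtain ⟨a, ha, hba⟩ := not_forall₂.mp h
    exact .inl ((sInf_le ha).trans ((s.le_or_le hb (ht ha)).resolve_left hba))

end Flag

section GeneralizedFlag

variable {k V : Type*} [Field k] [AddCommGroup V] [Module k V]
  {C : Set (Submodule k V)} {F' F'' G : Submodule k V} {v : V}

theorem IsImmediateSucc.le_left_of_notMem (hC : IsChain (· ≤ ·) C)
    (h : IsImmediateSucc C F' F'') (hG : G ∈ C) (hvG : v ∉ G) (hv : v ∈ F'') : G ≤ F' := by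
  obtain ⟨hF', hF'', -, hbetween⟩ := h
  by_contra hGF'
  have hF'G : F' < G := hC.lt_of_not_ge hG hF' hGF'
  have hGF'' : G < F'' := hC.lt_of_not_ge hF'' hG fun hle => hvG (hle hv)
  exact hbetween G hG ⟨hF'G, hGF''⟩

theorem IsImmediateSucc.right_le_of_mem (hC : IsChain (· ≤ ·) C)
    (h : IsImmediateSucc C F' F'') (hG : G ∈ C) (hvG : v ∈ G) (hv : v ∉ F') : F'' ≤ G := by
  obtain ⟨hF', hF'', -, hbetween⟩ := h
  by_contra hF''G
  have hF'G : F' < G := hC.lt_of_not_ge hG hF' fun hle => hv (hle hvG)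
  have hGF'' : G < F'' := hC.lt_of_not_ge hF'' hG hF''G
  exact hbetween G hG ⟨hF'G, hGF''⟩

variable (C) in
def jumpEndpoints : Set (Submodule k V) :=
  {F ∈ C | (∃ G, IsImmediateSucc C G F) ∨ ∃ G, IsImmediateSucc C F G}

theorem jumpEndpoints_subset : jumpEndpoints C ⊆ C := fun _ hF => hF.1

theorem isImmediateSucc_jumpEndpoints_iff (hC : IsChain (· ≤ ·) C)
    (hsep : ∀ v : V, v ≠ 0 → ∃ F' F'', IsImmediateSucc C F' F'' ∧ v ∈ F'' ∧ v ∉ F') :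
    IsImmediateSucc (jumpEndpoints C) F' F'' ↔ IsImmediateSucc C F' F'' := by
  constructor
  · rintro ⟨hF', hF'', hlt, hbetween⟩
    refine ⟨hF'.1, hF''.1, hlt, fun G hG ⟨hF'G, hGF''⟩ => ?_⟩
    obtain ⟨v, hvG, hvF'⟩ := SetLike.exists_of_lt hF'G
    obtain ⟨L, U, hLU, hvU, hvL⟩ := hsep v fun h => hvF' (h ▸ F'.zero_mem)
    have hF'L : F' ≤ L := hLU.le_left_of_notMem hC hF'.1 hvF' hvU
    have hUG : U ≤ G := hLU.right_le_of_mem hC hG hvG hvL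
    exact hbetween U ⟨hLU.2.1, .inl ⟨L, hLU⟩⟩
      ⟨hF'L.trans_lt hLU.2.2.1, hUG.trans_lt hGF''⟩
  · intro h
    exact ⟨⟨h.1, .inr ⟨F'', h⟩⟩, ⟨h.2.1, .inl ⟨F', h⟩⟩, h.2.2.1,
      fun G hG => h.2.2.2 G hG.1⟩

theorem isGeneralizedFlag_jumpEndpoints (hC : IsChain (· ≤ ·) C)
    (hsep : ∀ v : V, v ≠ 0 → ∃ F' F'', IsImmediateSucc C F' F'' ∧ v ∈ F'' ∧ v ∉ F') :
    IsGeneralizedFlag (jumpEndpoints C) := by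
  refine ⟨hC.mono jumpEndpoints_subset, fun F hF => ?_, fun v hv => ?_⟩
  · simp only [isImmediateSucc_jumpEndpoints_iff hC hsep]
    exact hF.2
  · simpa only [isImmediateSucc_jumpEndpoints_iff hC hsep] using hsep v hv

end GeneralizedFlag

theorem isImmediateSucc_image_iff_covBy {k V α : Type*} [Field k] [AddCommGroup V] [Module k V]
    [PartialOrder α] (e : α ↪o Submodule k V) {s : Flag α} {a b : α} :
    IsImmediateSucc (e '' s) (e a) (e b) ↔ a ∈ s ∧ b ∈ s ∧ a ⋖ b := by
  simp only [IsImmediateSucc, e.injective.mem_set_image, e.lt_iff_lt, Set.forall_mem_image]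
  constructor
  · rintro ⟨ha, hb, hab, hbetween⟩
    exact ⟨ha, hb, (Flag.coe_covBy_coe (a := ⟨a, ha⟩) (b := ⟨b, hb⟩)).2
      ⟨hab, fun c hac hcb => hbetween c.2 ⟨hac, hcb⟩⟩⟩
  · rintro ⟨ha, hb, hab⟩
    exact ⟨ha, hb, hab.lt, fun _ _ ⟨hac, hcb⟩ => hab.2 hac hcb⟩

namespace LieSubmodule

variable {R L M : Type*} [CommRing R] [LieRing L] [AddCommGroup M] [Module R M]
  [LieRingModule L M]

theorem mem_sSup_of_isChain {S : Set (LieSubmodule R L M)} (hne : S.Nonempty)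
    (hS : IsChain (· ≤ ·) S) {m : M} : m ∈ sSup S ↔ ∃ N ∈ S, m ∈ N := by
  have hcompact := (CompleteLattice.isCompactElement_iff_le_of_directed_sSup_le _ _).1
    (isCompactElement_lieSpan_singleton R L m)
  simp only [lieSpan_le, Set.singleton_subset_iff, SetLike.mem_coe] at hcompact
  exact ⟨hcompact S hne hS.directedOn, fun ⟨N, hN, hmN⟩ => le_sSup hN hmN⟩

theorem _root_.Flag.exists_covBy_separating (s : Flag (LieSubmodule R L M)) {m : M}
    (hm : m ≠ 0) : ∃ N₁ ∈ s, ∃ N₂ ∈ s, N₁ ⋖ N₂ ∧ m ∉ N₁ ∧ m ∈ N₂ := by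
  set S₁ := {N : LieSubmodule R L M | N ∈ s ∧ m ∉ N}
  set S₂ := {N : LieSubmodule R L M | N ∈ s ∧ m ∈ N}
  have hN₁ : sSup S₁ ∈ s := s.sSup_mem fun _ hN => hN.1
  have hN₂ : sInf S₂ ∈ s := s.sInf_mem fun _ hN => hN.1
  have hmN₁ : m ∉ sSup S₁ := fun h => by
    obtain ⟨N, hN, hmN⟩ := (mem_sSup_of_isChain (S := S₁) ⟨⊥, s.bot_mem, by simpa using hm⟩
      (s.chain_le.mono fun _ hN => hN.1)).1 h
    exact hN.2 hmN
  have hmN₂ : m ∈ sInf S₂ := by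
    rw [← SetLike.mem_coe, coe_sInf]
    exact Set.mem_iInter₂.2 fun N hN => hN.2
  have hle : sSup S₁ ≤ sInf S₂ := sSup_le fun N hN => le_sInf fun N' hN' =>
    (s.le_or_le hN.1 hN'.1).resolve_right fun h => hN.2 (h hN'.2)
  refine ⟨_, hN₁, _, hN₂, (Flag.coe_covBy_coe (a := ⟨_, hN₁⟩) (b := ⟨_, hN₂⟩)).2
    ⟨hle.lt_of_ne fun h => hmN₁ (h ▸ hmN₂), fun N hN₁N hNN₂ => ?_⟩, hmN₁, hmN₂⟩
  by_cases hmN : m ∈ (N : LieSubmodule R L M)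
  · exact hNN₂.not_ge (show sInf S₂ ≤ N from sInf_le ⟨N.2, hmN⟩)
  · exact hN₁N.not_ge (show (N : LieSubmodule R L M) ≤ sSup S₁ from le_sSup ⟨N.2, hmN⟩)

theorem exists_le_maximal_notMem {N : LieSubmodule R L M} {m : M} (hm : m ∉ N) :
    ∃ P, N ≤ P ∧ Maximal (fun Q : LieSubmodule R L M => m ∉ Q) P :=
  zorn_le_nonempty₀ {Q | m ∉ Q} (fun c hcm hc Q hQ => ⟨sSup c, fun h => by
    obtain ⟨Q', hQ', hmQ'⟩ := (mem_sSup_of_isChain ⟨Q, hQ⟩ hc).1 h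
    exact hcm hQ' hmQ', fun _ => le_sSup⟩) N hm

end LieSubmodule

theorem Module.End.hasEigenvalue_restrict_of_sub_smul_mem {k V : Type*} [Field k]
    [AddCommGroup V] [Module k V] {f : Module.End k V} {W P : Submodule k V}
    [FiniteDimensional k W] (hW : ∀ w ∈ W, f w ∈ W) (hP : ∀ p ∈ P, f p ∈ P) {u : V} {μ : k}
    (huW : u ∈ W) (huP : u ∉ P) (hμ : f u - μ • u ∈ P) :
    Module.End.HasEigenvalue (f.restrict hW) μ := by
  -- Otherwise `g = f - μ` is injective on `W`, hence bijective on the finite-dimensional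
  -- `g`-stable subspace `W ⊓ P`, and `g u ∈ W ⊓ P` forces `u ∈ P`.
  by_contra hμ'
  set g : Module.End k W := f.restrict hW - μ • 1
  have hg_inj : Function.Injective g := by
    rw [← LinearMap.ker_eq_bot, ← Module.End.eigenspace_def]
    exact not_ne_iff.1 hμ'
  set N : Submodule k W := P.comap W.subtype
  have hgN : ∀ n ∈ N, g n ∈ N := fun n hn => sub_mem (hP _ hn) (P.smul_mem μ hn)
  obtain ⟨n, hn⟩ := LinearMap.injective_iff_surjective.1
    (fun a b hab => Subtype.ext (hg_inj (congrArg Subtype.val hab)) : Function.Injective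
      (g.restrict hgN)) ⟨g ⟨u, huW⟩, hμ⟩
  have hnu : (n : W) = ⟨u, huW⟩ := hg_inj (congrArg Subtype.val hn)
  exact huP (hnu ▸ n.2 : (⟨u, huW⟩ : W) ∈ N)

theorem Submodule.finrank_quotient_sup_span_singleton {k V : Type*} [Field k]
    [AddCommGroup V] [Module k V] {F : Submodule k V} {u : V} (hu : u ∉ F) :
    Module.finrank k (↥(F ⊔ k ∙ u) ⧸ F.comap (F ⊔ k ∙ u).subtype) = 1 := by
  have hu0 : u ≠ 0 := fun h => hu (h ▸ F.zero_mem)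
  have hdisj : (k ∙ u).comap (k ∙ u).subtype ⊓ F.comap (k ∙ u).subtype = ⊥ := by
    rw [comap_subtype_self, top_inf_eq, ← disjoint_iff_comap_eq_bot, disjoint_comm]
    exact (disjoint_span_singleton' hu0).2 hu
  rw [sup_comm, ← (LinearMap.quotientInfEquivSupQuotient _ _).finrank_eq,
    (quotEquivOfEqBot _ hdisj).finrank_eq, finrank_span_singleton hu0]

theorem LieModule.exists_forall_lie_sub_smul_mem_of_maximal {k L M : Type*} [Field k]
    [IsAlgClosed k] [CharZero k] [LieRing L] [LieAlgebra k L] [LieAlgebra.IsSolvable L]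
    [AddCommGroup M] [Module k M] [LieRingModule L M] [LieModule k L M]
    {W P : LieSubmodule k L M} [FiniteDimensional k W] {u : M} (huW : u ∈ W)
    (hP : Maximal (fun Q : LieSubmodule k L M => u ∉ Q) P) :
    ∃ χ : L → k, ∀ x, ⁅x, u⁆ - χ x • u ∈ P := by
  -- The preimage `Q` of a weight space of the image of `W` in `M ⧸ P` strictly contains `P`,
  -- so by maximality it contains `u`.
  set π := LieSubmodule.Quotient.mk' P
  set W' := W.map π
  have : FiniteDimensional k W' := Module.Finite.map (W : Submodule k M) (π : M →ₗ[k] M ⧸ P)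
  have : Nontrivial W' := nontrivial_of_ne ⟨π u, LieSubmodule.mem_map_of_mem huW⟩ 0
    fun h => hP.1 (LieSubmodule.Quotient.mk_eq_zero'.1 (congrArg Subtype.val h))
  obtain ⟨χ, hχ⟩ := LieModule.exists_nontrivial_weightSpace_of_isSolvable k L W'
  set Q := ((weightSpace W' χ).map W'.incl).comap π
  obtain ⟨w, hw0⟩ := exists_ne (0 : weightSpace W' χ)
  obtain ⟨m, hm⟩ := LieSubmodule.Quotient.surjective_mk' P ((w : W') : M ⧸ P)
  have hmQ : m ∈ Q := ⟨w, w.2, hm.symm⟩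
  have hmP : m ∉ P := fun h => hw0 (by
    ext
    simpa [← hm] using LieSubmodule.Quotient.mk_eq_zero'.2 h)
  have hPQ : P ≤ Q := fun p hp => by
    simp [Q, LieSubmodule.mem_comap, π, LieSubmodule.Quotient.mk_eq_zero'.2 hp]
  have huQ : u ∈ Q := by_contra fun huQ => hmP (hP.2 huQ hPQ hmQ)
  obtain ⟨v, hv, hvu⟩ := (LieSubmodule.mem_map _).1 (LieSubmodule.mem_comap.1 huQ)
  refine ⟨χ, fun x => LieSubmodule.Quotient.mk_eq_zero'.1 ?_⟩
  have hvx := congrArg Subtype.val ((mem_weightSpace χ v).1 hv x)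
  change π (⁅x, u⁆ - χ x • u) = 0
  rw [map_sub, map_smul, LieModuleHom.map_lie, ← hvu]
  exact sub_eq_zero.2 hvx

open CategoryTheory in
theorem Finset.exists_forall_restrict_mem {ι α : Type*} (S : ∀ t : Finset ι, Set (t → α))
    (hS : ∀ ⦃t t' : Finset ι⦄ (h : t ⊆ t'), ∀ f ∈ S t', (fun i : t => f ⟨i, h i.2⟩) ∈ S t)
    (hfin : ∀ t, (S t).Finite) (hne : ∀ t, (S t).Nonempty) :
    ∃ f : ι → α, ∀ t, (fun i : t => f i) ∈ S t := by
  let F : (Finset ι)ᵒᵖ ⥤ Type _ :=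
    { obj := fun t => S t.unop
      map := fun h => ↾fun f => ⟨_, hS (leOfHom h.unop) f.1 f.2⟩ }
  have (t : (Finset ι)ᵒᵖ) : Finite (F.obj t) := (hfin t.unop).to_subtype
  have (t : (Finset ι)ᵒᵖ) : Nonempty (F.obj t) := (hne t.unop).to_subtype
  obtain ⟨σ, hσ⟩ := nonempty_sections_of_finite_inverse_system F
  refine ⟨fun i => (σ (.op {i})).1 ⟨i, mem_singleton_self i⟩, fun t => ?_⟩
  convert (σ (.op t)).2 using 1
  funext i
  exact (congrFun (congrArg Subtype.val
    (hσ (homOfLE (singleton_subset_iff.2 i.2)).op)) ⟨i.1, mem_singleton_self _⟩).symm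

section

open LieSubalgebra

variable (k B V : Type*) [Field k] [LieRing B] [LieAlgebra k B] [AddCommGroup V] [Module k V]
  [LieRingModule B V]

def LieAlgebra.IsLocallySolvable : Prop :=
  ∀ s : Finset B, LieAlgebra.IsSolvable (lieSpan k B ↑s)

def LieModule.IsIntegrable : Prop :=
  ∀ (s : Finset V) (t : Finset B), ∃ W : Submodule k V,
    FiniteDimensional k W ∧ (↑s : Set V) ⊆ W ∧ ∀ x ∈ lieSpan k B ↑t, ∀ w ∈ W, ⁅x, w⁆ ∈ W

variable {k B V}

def quotientWeights (A : LieSubmodule k B V) (u : V) (t : Finset B) : Set (t → k) :=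
  {χ | ∃ P : Submodule k V, (∀ x ∈ lieSpan k B ↑t, ∀ p ∈ P, ⁅x, p⁆ ∈ P) ∧
    (A : Submodule k V) ≤ P ∧ u ∉ P ∧ ∀ i : t, ⁅(i : B), u⁆ - χ i • u ∈ P}

namespace quotientWeights

variable {A : LieSubmodule k B V} {u : V}

theorem restrict {t t' : Finset B} (h : t ⊆ t') {χ : t' → k}
    (hχ : χ ∈ quotientWeights A u t') : (fun i : t => χ ⟨i, h i.2⟩) ∈ quotientWeights A u t := by
  obtain ⟨P, hP, hAP, huP, hχP⟩ := hχ
  exact ⟨P, fun x hx => hP x (lieSpan_mono (by exact_mod_cast h) hx), hAP, huP,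
    fun i => hχP ⟨i, h i.2⟩⟩

theorem finite [LieModule k B V] (hV : LieModule.IsIntegrable k B V) (t : Finset B) :
    (quotientWeights A u t).Finite := by
  obtain ⟨W, hW, huW, hWt⟩ := hV {u} t
  have hx (i : t) : ∀ w ∈ W, LieModule.toEnd k B V i w ∈ W :=
    hWt i (subset_lieSpan (by exact_mod_cast i.2))
  refine (Set.Finite.pi fun i : t =>
    Module.End.finite_hasEigenvalue ((LieModule.toEnd k B V i).restrict (hx i))).subset ?_
  rintro χ ⟨P, hP, -, huP, hχP⟩ i -
  exact Module.End.hasEigenvalue_restrict_of_sub_smul_mem (hx i)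
    (hP i (subset_lieSpan (by exact_mod_cast i.2))) (huW (by simp)) huP (hχP i)

theorem nonempty [IsAlgClosed k] [CharZero k] [LieModule k B V]
    (hB : LieAlgebra.IsLocallySolvable k B) (hV : LieModule.IsIntegrable k B V) (hu : u ∉ A)
    (t : Finset B) :
    (quotientWeights A u t).Nonempty := by
  have := hB t
  obtain ⟨W, hW, huW, hWt⟩ := hV {u} t
  let W' : LieSubmodule k (lieSpan k B ↑t) V :=
    { toSubmodule := W, lie_mem := fun {x _} hm => hWt x x.2 _ hm }
  have : FiniteDimensional k W' := hW
  obtain ⟨P, hAP, hP⟩ := (A.restr (lieSpan k B ↑t)).exists_le_maximal_notMem hu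
  obtain ⟨χ, hχ⟩ :=
    LieModule.exists_forall_lie_sub_smul_mem_of_maximal (W := W') (huW (by simp)) hP
  exact ⟨fun i => χ ⟨i, subset_lieSpan (by exact_mod_cast i.2)⟩, P,
    fun x hx _ hp => P.lie_mem (x := ⟨x, hx⟩) hp, hAP, hP.1, fun i => hχ ⟨i, _⟩⟩

end quotientWeights

variable {A : LieSubmodule k B V} {u : V} {χ : B → k}

theorem LieSubmodule.exists_ge_forall_lie_sub_smul_mem
    (hχ : ∀ t : Finset B, (fun i : t => χ i) ∈ quotientWeights A u t) :
    ∃ U : LieSubmodule k B V, A ≤ U ∧ u ∉ U ∧ ∀ x, ⁅x, u⁆ - χ x • u ∈ U := by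
  classical
  let fam (t : Finset B) : Set (Submodule k V) :=
    {P | (∀ x ∈ LieSubalgebra.lieSpan k B (t : Set B), ∀ p ∈ P, ⁅x, p⁆ ∈ P) ∧
      (A : Submodule k V) ≤ P ∧ ∀ x ∈ t, ⁅x, u⁆ - χ x • u ∈ P}
  have fam_anti {t t' : Finset B} (h : t ⊆ t') {P} (hP : P ∈ fam t') : P ∈ fam t :=
    ⟨fun x hx => hP.1 x (LieSubalgebra.lieSpan_mono (by exact_mod_cast h) hx), hP.2.1,
      fun x hx => hP.2.2 x (h hx)⟩
  let U : LieSubmodule k B V :=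
    { carrier := {v | ∃ t, ∀ P ∈ fam t, v ∈ P}
      zero_mem' := ⟨∅, fun P _ => P.zero_mem⟩
      add_mem' := fun ⟨t₁, h₁⟩ ⟨t₂, h₂⟩ => ⟨t₁ ∪ t₂, fun P hP =>
        add_mem (h₁ P (fam_anti Finset.subset_union_left hP))
          (h₂ P (fam_anti Finset.subset_union_right hP))⟩
      smul_mem' := fun c _ ⟨t, h⟩ => ⟨t, fun P hP => P.smul_mem c (h P hP)⟩
      lie_mem := fun {x _} ⟨t, h⟩ => ⟨insert x t, fun P hP =>
        hP.1 x (LieSubalgebra.subset_lieSpan (Finset.mem_insert_self x t)) _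
          (h P (fam_anti (Finset.subset_insert x t) hP))⟩ }
  refine ⟨U, fun v hv => ⟨∅, fun P hP => hP.2.1 hv⟩, fun ⟨t, h⟩ => ?_,
    fun x => ⟨{x}, fun P hP => hP.2.2 x (Finset.mem_singleton_self x)⟩⟩
  obtain ⟨P, hP, hAP, huP, hχP⟩ := hχ t
  exact huP (h P ⟨hP, hAP, fun x hx => hχP ⟨x, hx⟩⟩)

theorem LieSubmodule.toSubmodule_eq_sup_span_of_covBy [LieModule k B V]
    {A₂ U : LieSubmodule k B V} (h : A ⋖ A₂) (hu₂ : u ∈ A₂) (hu : u ∉ A) (hAU : A ≤ U) (huU : u ∉ U)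
    (hχ : ∀ x, ⁅x, u⁆ - χ x • u ∈ U) : (A₂ : Submodule k V) = (A : Submodule k V) ⊔ k ∙ u := by
  have hUA₂ : U ⊓ A₂ = A := (h.eq_or_eq (le_inf hAU h.le) inf_le_right).resolve_right
    fun hA₂ => huU (hA₂.symm ▸ hu₂ : u ∈ U ⊓ A₂).1
  have hχA (x : B) : ⁅x, u⁆ - χ x • u ∈ A := by
    have : ⁅x, u⁆ - χ x • u ∈ U ⊓ A₂ :=
      (LieSubmodule.mem_inf _ _ _).2 ⟨hχ x, sub_mem (A₂.lie_mem hu₂) (A₂.smul_mem _ hu₂)⟩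
    rwa [hUA₂] at this
  let G : LieSubmodule k B V :=
    { toSubmodule := A ⊔ k ∙ u
      lie_mem := fun {x m} hm => by
        obtain ⟨a, ha, _, hc, rfl⟩ := Submodule.mem_sup.1 hm
        obtain ⟨c, rfl⟩ := Submodule.mem_span_singleton.1 hc
        rw [lie_add, lie_smul, ← sub_add_cancel ⁅x, u⁆ (χ x • u), smul_add, smul_smul]
        exact add_mem (Submodule.mem_sup_left (A.lie_mem ha))
          (add_mem (Submodule.mem_sup_left (A.smul_mem c (hχA x)))
            (Submodule.mem_sup_right
              (Submodule.smul_mem _ _ (Submodule.mem_span_singleton_self u)))) }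
  have hAG : A ≤ G := fun _ hm => Submodule.mem_sup_left hm
  have hGA₂ : G ≤ A₂ := fun _ hm =>
    (sup_le h.le (by simpa [Submodule.span_le] using hu₂) : (A : Submodule k V) ⊔ k ∙ u ≤ A₂) hm
  have huG : u ∈ G := Submodule.mem_sup_right (Submodule.mem_span_singleton_self u)
  obtain hGA | hGA₂' := h.eq_or_eq hAG hGA₂
  · exact absurd (hGA ▸ huG) hu
  · exact congrArg LieSubmodule.toSubmodule hGA₂'.symm

theorem LieSubmodule.finrank_quotient_eq_one_of_covBy [IsAlgClosed k] [CharZero k]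
    [LieModule k B V] (hB : LieAlgebra.IsLocallySolvable k B) (hV : LieModule.IsIntegrable k B V)
    {A₁ A₂ : LieSubmodule k B V} (h : A₁ ⋖ A₂) :
    Module.finrank k (↥(A₂ : Submodule k V) ⧸ (A₁ : Submodule k V).comap
      (A₂ : Submodule k V).subtype) = 1 := by
  obtain ⟨u, hu₂, hu₁⟩ := SetLike.exists_of_lt h.lt
  obtain ⟨χ, hχ⟩ := Finset.exists_forall_restrict_mem (quotientWeights A₁ u)
    (fun _ _ h _ => quotientWeights.restrict h) (quotientWeights.finite hV)
    (quotientWeights.nonempty hB hV hu₁)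
  obtain ⟨U, hAU, huU, hχU⟩ := exists_ge_forall_lie_sub_smul_mem hχ
  rw [toSubmodule_eq_sup_span_of_covBy h hu₂ hu₁ hAU huU hχU]
  exact Submodule.finrank_quotient_sup_span_singleton hu₁

end

/-- A locally solvable Lie algebra `B` stabilizes a maximal generalized flag in any
integrable `B`-module `V`. -/
theorem locallySolvable_stabilizes_maximal_flag
    {k B V : Type*} [Field k] [IsAlgClosed k] [CharZero k]
    [LieRing B] [LieAlgebra k B]
    [AddCommGroup V] [Module k V] [LieRingModule B V] [LieModule k B V]
    -- `B` is locally solvable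
    (hBsolv : ∀ s : Finset B, LieAlgebra.IsSolvable (LieSubalgebra.lieSpan k B ↑s))
    -- `V` is an integrable `B`-module
    (hInt : ∀ (s : Finset V) (t : Finset B), ∃ W : Submodule k V,
      FiniteDimensional k W ∧ (↑s : Set V) ⊆ (W : Set V) ∧
      ∀ x ∈ LieSubalgebra.lieSpan k B ↑t, ∀ w ∈ W, ⁅x, w⁆ ∈ W) :
    ∃ 𝔉 : Set (Submodule k V), IsMaximalGeneralizedFlag 𝔉 ∧
      ∀ x : B, ∀ F ∈ 𝔉, ∀ v ∈ F, ⁅x, v⁆ ∈ F := by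
  obtain ⟨s⟩ : Nonempty (Flag (LieSubmodule k B V)) := inferInstance
  let e := LieSubmodule.toSubmodule_orderEmbedding k B V
  have hC : IsChain (· ≤ ·) (e '' s) := s.chain_le.image e
  have hsep (v : V) (hv : v ≠ 0) :
      ∃ F' F'', IsImmediateSucc (e '' s) F' F'' ∧ v ∈ F'' ∧ v ∉ F' := by
    obtain ⟨A₁, hA₁, A₂, hA₂, h, hv₁, hv₂⟩ := s.exists_covBy_separating hv
    exact ⟨e A₁, e A₂, isImmediateSucc_image_iff_covBy e |>.2 ⟨hA₁, hA₂, h⟩, hv₂, hv₁⟩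
  refine ⟨jumpEndpoints (e '' s), ⟨isGeneralizedFlag_jumpEndpoints hC hsep, ?_⟩, ?_⟩
  · intro F' F'' h
    rw [isImmediateSucc_jumpEndpoints_iff hC hsep] at h
    obtain ⟨A₁, -, rfl⟩ := h.1
    obtain ⟨A₂, -, rfl⟩ := h.2.1
    exact LieSubmodule.finrank_quotient_eq_one_of_covBy hBsolv hInt
      ((isImmediateSucc_image_iff_covBy e).1 h).2.2
  · rintro x _ ⟨⟨A, -, rfl⟩, -⟩ v hv
    exact A.lie_mem hv
end
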